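/- arXiv:1502.02738 — 2 statements merged into one kernel-verified Lean document; each statement's English description precedes it below -/
import Mathlib

section
/- Let ρ_n ∈ (0,1) with ρ_n → 1 and ∑_n 1/(ln(1-ρ_n))² < ∞. Let Y_n be independent random variables with Y_n distributed as (ln ρ_n / ln(1-ρ_n)) X_{ρ_n}, where X_{ρ_n} has mass function x ↦ ρ_n^x ∏_{j=0}^∞ (1-ρ_n^{x+1+j}) on ℕ. Then Y_n → 1 almost surely. -/
/-!
Write `t = 1 - r` and `L = log t / log r`, so that `r ^ L = t`. Since `1 - u ≤ exp (-u)`, the mass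
function of `X_r` is at most `r ^ x * exp (-r ^ (x + 1) / t)`. Summing geometric tails gives
`P(X_r ≥ (1 + ε) L) ≤ t ^ ε` and `P(X_r ≤ (1 - ε) L) ≤ exp (-r t ^ (-ε)) / t`, and both bounds are
`o(1 / log² t)` as `t → 0⁺`. Along `ρ_n` the deviation probabilities are therefore summable, and
the first Borel–Cantelli lemma yields almost sure convergence.
-/

open Filter Set MeasureTheory ProbabilityTheory

open Real Topology Asymptotics

theorem Real.tprod_one_sub_le_exp_neg_tsum {ι : Type*} {a : ι → ℝ} (h1 : ∀ i, a i < 1)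
    (ha : Summable a) : ∏' i, (1 - a i) ≤ exp (-∑' i, a i) := by
  have hpos : ∀ i, 0 < 1 - a i := fun i => sub_pos.2 (h1 i)
  have hlog : Summable fun i => log (1 - a i) := by
    simpa [sub_eq_add_neg] using summable_log_one_add_of_summable ha.neg
  rw [← rexp_tsum_eq_tprod hpos hlog, ← tsum_neg]
  exact exp_le_exp.2 <| hlog.tsum_le_tsum
    (fun i => by linarith [log_le_sub_one_of_pos (hpos i)]) ha.neg

theorem hasSum_pow_add {r : ℝ} (hr0 : 0 ≤ r) (hr1 : r < 1) (m : ℕ) :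
    HasSum (fun j : ℕ => r ^ (m + j)) (r ^ m / (1 - r)) := by
  simpa [pow_add, div_eq_mul_inv] using
    (hasSum_geometric_of_lt_one hr0 hr1).mul_left (r ^ m)

noncomputable def frogMass (r : ℝ) (x : ℕ) : ℝ := r ^ x * ∏' j : ℕ, (1 - r ^ (x + 1 + j))

section FrogLaw

variable {r : ℝ} {Ω : Type*} [MeasurableSpace Ω] {μ : Measure Ω} {Y : Ω → ℕ}

theorem frogMass_le_pow_mul_exp (hr0 : 0 < r) (hr1 : r < 1) (x : ℕ) :
    frogMass r x ≤ r ^ x * exp (-(r ^ (x + 1) / (1 - r))) := by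
  have hsum := hasSum_pow_add hr0.le hr1 (x + 1)
  refine mul_le_mul_of_nonneg_left ?_ (pow_nonneg hr0.le x)
  rw [← hsum.tsum_eq]
  exact Real.tprod_one_sub_le_exp_neg_tsum
    (fun j => pow_lt_one₀ hr0.le hr1 (by omega)) hsum.summable

theorem frogMass_le_pow (hr0 : 0 < r) (hr1 : r < 1) (x : ℕ) : frogMass r x ≤ r ^ x :=
  (frogMass_le_pow_mul_exp hr0 hr1 x).trans <|
    mul_le_of_le_one_right (pow_nonneg hr0.le x) <| exp_le_one_iff.2 <|
      neg_nonpos.2 <| div_nonneg (pow_nonneg hr0.le _) (sub_pos.2 hr1).le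

theorem measure_ge_le_rpow_div (hr0 : 0 < r) (hr1 : r < 1)
    (hY : ∀ x, μ {ω | Y ω = x} = ENNReal.ofReal (frogMass r x)) (a : ℝ) :
    μ {ω | a ≤ Y ω} ≤ ENNReal.ofReal (r ^ a / (1 - r)) := by
  set m := ⌈a⌉₊
  have hsub : {ω | a ≤ Y ω} ⊆ ⋃ x : ℕ, {ω | Y ω = m + x} := fun ω hω =>
    have := Nat.ceil_le.2 (show a ≤ Y ω from hω)
    mem_iUnion.2 ⟨Y ω - m, by simp only [mem_ofPred_eq]; omega⟩
  calc μ {ω | a ≤ Y ω} ≤ ∑' x : ℕ, μ {ω | Y ω = m + x} :=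
        (measure_mono hsub).trans (measure_iUnion_le _)
    _ ≤ ∑' x : ℕ, ENNReal.ofReal (r ^ (m + x)) := ENNReal.tsum_le_tsum fun x =>
        (hY _).trans_le <| ENNReal.ofReal_le_ofReal <| frogMass_le_pow hr0 hr1 _
    _ = ENNReal.ofReal (r ^ m / (1 - r)) := by
      rw [← ENNReal.ofReal_tsum_of_nonneg (fun x => pow_nonneg hr0.le _)
        (hasSum_pow_add hr0.le hr1 m).summable, (hasSum_pow_add hr0.le hr1 m).tsum_eq]
    _ ≤ ENNReal.ofReal (r ^ a / (1 - r)) := by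
      gcongr ENNReal.ofReal (?_ / _)
      rw [← rpow_natCast]
      exact rpow_le_rpow_of_exponent_ge hr0 hr1.le (Nat.le_ceil a)

theorem measure_le_le_exp_div (hr0 : 0 < r) (hr1 : r < 1)
    (hY : ∀ x, μ {ω | Y ω = x} = ENNReal.ofReal (frogMass r x)) {a : ℝ} (ha : 0 ≤ a) :
    μ {ω | (Y ω : ℝ) ≤ a} ≤ ENNReal.ofReal (exp (-(r ^ (a + 1) / (1 - r))) / (1 - r)) := by
  set E := exp (-(r ^ (a + 1) / (1 - r))) with hE
  have hsub : {ω | (Y ω : ℝ) ≤ a} ⊆ ⋃ x ∈ Finset.range (⌊a⌋₊ + 1), {ω | Y ω = x} := fun ω hω =>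
    mem_iUnion₂.2 ⟨Y ω, Finset.mem_range_succ_iff.2 (Nat.le_floor hω), rfl⟩
  have hmass : ∀ x ∈ Finset.range (⌊a⌋₊ + 1), frogMass r x ≤ r ^ x * E := by
    intro x hx
    refine (frogMass_le_pow_mul_exp hr0 hr1 x).trans ?_
    rw [hE]
    gcongr r ^ x * exp (-(?_ / _))
    rw [← rpow_natCast]
    push_cast
    have : (x : ℝ) ≤ a := (Nat.cast_le.2 (Finset.mem_range_succ_iff.1 hx)).trans (Nat.floor_le ha)
    exact rpow_le_rpow_of_exponent_ge hr0 hr1.le (by linarith)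
  calc μ {ω | (Y ω : ℝ) ≤ a} ≤ ∑ x ∈ Finset.range (⌊a⌋₊ + 1), μ {ω | Y ω = x} :=
        (measure_mono hsub).trans (measure_biUnion_finset_le _ _)
    _ ≤ ∑ x ∈ Finset.range (⌊a⌋₊ + 1), ENNReal.ofReal (r ^ x * E) :=
        Finset.sum_le_sum fun x hx => (hY x).trans_le (ENNReal.ofReal_le_ofReal (hmass x hx))
    _ = ENNReal.ofReal ((∑ x ∈ Finset.range (⌊a⌋₊ + 1), r ^ x) * E) := by
        rw [Finset.sum_mul, ENNReal.ofReal_sum_of_nonneg fun x _ => by positivity]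
    _ ≤ ENNReal.ofReal (E / (1 - r)) := by
        rw [div_eq_inv_mul, ← tsum_geometric_of_lt_one hr0.le hr1]
        gcongr
        exact (summable_geometric_of_lt_one hr0.le hr1).sum_le_tsum _ fun x _ => pow_nonneg hr0.le x

theorem measure_relative_deviation_le (hr0 : 0 < r) (hr1 : r < 1)
    (hY : ∀ x, μ {ω | Y ω = x} = ENNReal.ofReal (frogMass r x)) {ε : ℝ} (hε1 : ε ≤ 1) :
    μ {ω | ε ≤ |log r / log (1 - r) * Y ω - 1|} ≤
      ENNReal.ofReal ((1 - r) ^ ε) + ENNReal.ofReal (exp (-(r * (1 - r) ^ (-ε))) / (1 - r)) := by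
  set t := 1 - r
  have ht0 : 0 < t := sub_pos.2 hr1
  set L := logb r t
  have hL : 0 < L := logb_pos_of_base_lt_one hr0 hr1 ht0 (by linarith)
  have hrL : r ^ L = t := rpow_logb hr0 hr1.ne ht0
  have hsub : {ω | ε ≤ |log r / log t * Y ω - 1|} ⊆
      {ω | (1 + ε) * L ≤ Y ω} ∪ {ω | (Y ω : ℝ) ≤ (1 - ε) * L} := by
    intro ω hω
    have hY : (Y ω : ℝ) = L * (L⁻¹ * Y ω) := (mul_inv_cancel_left₀ hL.ne' _).symm
    rw [mem_ofPred_eq, ← inv_div, log_div_log, le_abs'] at hω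
    rcases hω with hω | hω
    · exact Or.inr (by rw [mem_ofPred_eq, hY, mul_comm _ L]; gcongr; linarith)
    · exact Or.inl (by rw [mem_ofPred_eq, hY, mul_comm _ L]; gcongr; linarith)
  have hup : r ^ ((1 + ε) * L) / t = t ^ ε := by
    rw [mul_comm, rpow_mul hr0.le, hrL, rpow_add ht0, rpow_one, mul_div_cancel_left₀ _ ht0.ne']
  have hlo : r ^ ((1 - ε) * L + 1) / t = r * t ^ (-ε) := by
    rw [rpow_add hr0, rpow_one, mul_comm _ L, rpow_mul hr0.le, hrL, sub_eq_add_neg,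
      rpow_add ht0, rpow_one]
    field_simp
  calc μ {ω | ε ≤ |log r / log t * Y ω - 1|}
      ≤ μ {ω | (1 + ε) * L ≤ Y ω} + μ {ω | (Y ω : ℝ) ≤ (1 - ε) * L} :=
        (measure_mono hsub).trans (measure_union_le _ _)
    _ ≤ ENNReal.ofReal (t ^ ε) + ENNReal.ofReal (exp (-(r * t ^ (-ε))) / t) := by
        gcongr
        · exact hup ▸ measure_ge_le_rpow_div hr0 hr1 hY _
        · refine hlo ▸ measure_le_le_exp_div hr0 hr1 hY ?_
          exact mul_nonneg (by linarith) hL.le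

end FrogLaw

theorem rpow_isLittleO_inv_log_sq {ε : ℝ} (hε : 0 < ε) :
    (fun t => t ^ ε) =o[𝓝[>] 0] fun t => 1 / log t ^ 2 := by
  have hlog : ∀ᶠ t in 𝓝[>] (0 : ℝ), log t ≠ 0 := by
    filter_upwards [Ioo_mem_nhdsGT one_pos] with t ht
    exact log_ne_zero_of_pos_of_ne_one ht.1 ht.2.ne
  refine (isLittleO_iff_tendsto' (hlog.mono fun t ht h => absurd h (by simpa using ht))).2 ?_
  have := (tendsto_log_mul_rpow_nhdsGT_zero (half_pos hε)).pow 2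
  rw [zero_pow two_ne_zero] at this
  refine this.congr' ?_
  filter_upwards [eventually_mem_nhdsWithin] with t (ht : 0 < t)
  rw [div_div_eq_mul_div, div_one, mul_pow, ← rpow_natCast (t ^ (ε / 2)), ← rpow_mul ht.le,
    Nat.cast_ofNat, div_mul_cancel₀ ε two_ne_zero, mul_comm]

theorem eventually_exp_neg_rpow_div_le_rpow {ε : ℝ} (hε : 0 < ε) :
    ∀ᶠ t in 𝓝[>] 0, exp (-(t ^ (-ε) / 2)) / t ≤ t ^ ε := by
  have hsmall : ∀ᶠ t in 𝓝[>] (0 : ℝ), -(1 / 2) < log t * (1 + ε) * t ^ ε := by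
    have := (tendsto_log_mul_rpow_nhdsGT_zero hε).mul_const (1 + ε)
    rw [zero_mul] at this
    filter_upwards [this.eventually (eventually_gt_nhds (by norm_num : -(1 / 2 : ℝ) < 0))]
      with t ht
    linarith
  filter_upwards [hsmall, eventually_mem_nhdsWithin] with t hlog (ht : 0 < t)
  have hexp : -(t ^ (-ε) / 2) ≤ log t * (1 + ε) := by
    rw [rpow_neg ht.le, ← one_div, div_div, mul_comm, ← div_div, ← neg_div,
      div_le_iff₀ (rpow_pos_of_pos ht ε)]
    exact hlog.le
  calc exp (-(t ^ (-ε) / 2)) / t ≤ t ^ (1 + ε) / t := by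
        gcongr
        rw [rpow_def_of_pos ht (1 + ε)]
        exact exp_le_exp.2 hexp
    _ = t ^ ε := by rw [rpow_add ht, rpow_one, mul_div_cancel_left₀ _ ht.ne']

theorem summable_rpow_of_summable_inv_log_sq {t : ℕ → ℝ} (ht : Tendsto t atTop (𝓝[>] 0))
    (hsum : Summable fun n => 1 / log (t n) ^ 2) {ε : ℝ} (hε : 0 < ε) :
    Summable fun n => t n ^ ε :=
  summable_of_isBigO_nat hsum ((rpow_isLittleO_inv_log_sq hε).isBigO.comp_tendsto ht)

theorem summable_exp_neg_mul_rpow_div {t r : ℕ → ℝ} (ht : Tendsto t atTop (𝓝[>] 0))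
    (hr : ∀ᶠ n in atTop, 1 / 2 ≤ r n) {ε : ℝ} (hε : 0 < ε) (hsum : Summable fun n => t n ^ ε) :
    Summable fun n => exp (-(r n * t n ^ (-ε))) / t n := by
  refine hsum.of_norm_bounded_eventually_nat ?_
  filter_upwards [hr, ht.eventually (eventually_exp_neg_rpow_div_le_rpow hε),
    ht.eventually eventually_mem_nhdsWithin] with n hrn hn (htn : 0 < t n)
  rw [norm_of_nonneg (by positivity)]
  refine le_trans ?_ hn
  have : 0 < t n ^ (-ε) := rpow_pos_of_pos htn _
  gcongr
  nlinarith

theorem ae_eventually_relative_deviation_lt {Ω : Type*} [MeasurableSpace Ω] {μ : Measure Ω}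
    {X : ℕ → Ω → ℕ} {ρ : ℕ → ℝ} (hρ : ∀ n, ρ n ∈ Ioo 0 1)
    (hX : ∀ n x, μ {ω | X n ω = x} = ENNReal.ofReal (frogMass (ρ n) x))
    (ht : Tendsto (fun n => 1 - ρ n) atTop (𝓝[>] 0)) (hhalf : ∀ᶠ n in atTop, 1 / 2 ≤ ρ n)
    (hsum : Summable fun n => 1 / log (1 - ρ n) ^ 2) {ε : ℝ} (hε0 : 0 < ε) (hε1 : ε ≤ 1) :
    ∀ᵐ ω ∂μ, ∀ᶠ n in atTop, |log (ρ n) / log (1 - ρ n) * X n ω - 1| < ε := by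
  have hpow := summable_rpow_of_summable_inv_log_sq ht hsum hε0
  have hexp := summable_exp_neg_mul_rpow_div ht hhalf hε0 hpow
  have hfin : ∑' n, μ {ω | ε ≤ |log (ρ n) / log (1 - ρ n) * X n ω - 1|} ≠ ⊤ :=
    ne_top_of_le_ne_top
      (ENNReal.tsum_add ▸ ENNReal.add_ne_top.2 ⟨hpow.tsum_ofReal_ne_top, hexp.tsum_ofReal_ne_top⟩)
      (ENNReal.tsum_le_tsum fun n => measure_relative_deviation_le (hρ n).1 (hρ n).2 (hX n) hε1)
  filter_upwards [ae_eventually_notMem hfin] with ω hω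
  filter_upwards [hω] with n hn
  exact not_le.1 hn

theorem scaled_as_convergence_general
    {Ω : Type*} [MeasurableSpace Ω] (μ : Measure Ω)
    (ρ : ℕ → ℝ) (hρ : ∀ n, ρ n ∈ Set.Ioo (0:ℝ) 1)
    (hlim : Tendsto ρ atTop (nhds 1))
    (hsum : Summable fun n => 1 / (Real.log (1 - ρ n)) ^ 2)
    (X : ℕ → Ω → ℕ)
    (hdist : ∀ n x, μ {ω | X n ω = x} =
      ENNReal.ofReal ((ρ n) ^ x * ∏' j : ℕ, (1 - (ρ n) ^ (x + 1 + j)))) :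
    ∀ᵐ ω ∂μ,
      Tendsto (fun n => Real.log (ρ n) / Real.log (1 - ρ n) * (X n ω : ℝ))
        atTop (nhds 1) := by
  have ht : Tendsto (fun n => 1 - ρ n) atTop (𝓝[>] 0) :=
    tendsto_nhdsWithin_iff.2 ⟨by simpa using (tendsto_const_nhds (x := (1 : ℝ))).sub hlim,
      .of_forall fun n => sub_pos.2 (hρ n).2⟩
  have hhalf : ∀ᶠ n in atTop, 1 / 2 ≤ ρ n := hlim.eventually (eventually_ge_nhds (by norm_num))
  have hdev (k : ℕ) := ae_eventually_relative_deviation_lt hρ hdist ht hhalf hsum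
    (Nat.one_div_pos_of_nat (n := k)) (div_le_one_of_le₀ (by simp) (by positivity))
  filter_upwards [ae_all_iff.2 hdev] with ω hω
  exact Metric.nhds_basis_ball_inv_nat_succ.tendsto_right_iff.2 fun k _ => hω k

theorem scaled_as_convergence
    {Ω : Type*} [MeasurableSpace Ω] (μ : Measure Ω) [IsProbabilityMeasure μ]
    (ρ : ℕ → ℝ) (hρ : ∀ n, ρ n ∈ Set.Ioo (0:ℝ) 1)
    (hlim : Tendsto ρ atTop (nhds 1))
    (hsum : Summable fun n => 1 / (Real.log (1 - ρ n)) ^ 2)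
    (X : ℕ → Ω → ℕ) (hmeas : ∀ n, Measurable (X n))
    (hind : iIndepFun X μ)
    (hdist : ∀ n x, μ {ω | X n ω = x} =
      ENNReal.ofReal ((ρ n) ^ x * ∏' j : ℕ, (1 - (ρ n) ^ (x + 1 + j)))) :
    ∀ᵐ ω ∂μ,
      Tendsto (fun n => Real.log (ρ n) / Real.log (1 - ρ n) * (X n ω : ℝ))
        atTop (nhds 1) :=
  scaled_as_convergence_general μ ρ hρ hlim hsum X hdist
end

section
/- Fix δ ∈ (0,1) and for ρ ∈ (0,1) let Z = ln(1-ρ)/ln ρ (assume Z(1-δ) is a positive integer). Then Q(ρ) = ∏_{j=0}^{Z(1-δ)-1} (1 - ρ^{Z(1-δ)+j}) satisfies lim_{ρ→1⁻} Q(ρ) = 0. -/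
/-!
Since `ρ ^ Z = 1 - ρ`, the factors are `1 - (1 - ρ) ^ (1 - δ) * ρ ^ j`. Bounding `1 - x ≤ e ^ (-x)`
and summing the geometric series gives `Q(ρ) ≤ exp (-((1 - ρ) ^ (-δ) * (1 - ρ ^ N)))` with
`N = ⌊Z(1 - δ)⌋`, and `ρ ^ N ≤ ρ ^ (Z(1 - δ) - 1) = (1 - ρ) ^ (1 - δ) / ρ → 0` while
`(1 - ρ) ^ (-δ) → ∞`.
-/

open Filter Set Finset Real Topology

theorem prod_one_sub_le_exp_neg_sum {ι : Type*} (s : Finset ι) {x : ι → ℝ}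
    (hx : ∀ i ∈ s, x i ≤ 1) : ∏ i ∈ s, (1 - x i) ≤ exp (-∑ i ∈ s, x i) := by
  rw [← sum_neg_distrib, exp_sum]
  exact prod_le_prod (fun i hi => sub_nonneg.mpr (hx i hi)) fun i _ => one_sub_le_exp_neg _

theorem sum_rpow_add_natCast {ρ : ℝ} (hρ0 : 0 < ρ) (hρ1 : ρ ≠ 1) (a : ℝ) (N : ℕ) :
    ∑ j ∈ range N, ρ ^ (a + j) = ρ ^ a * (1 - ρ ^ N) / (1 - ρ) := by
  have hρ1' : 1 - ρ ≠ 0 := sub_ne_zero.mpr hρ1.symm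
  simp_rw [rpow_add hρ0, rpow_natCast, ← mul_sum, geom_sum_eq hρ1]
  field_simp
  ring

theorem rpow_logb_mul {b y : ℝ} (hb0 : 0 < b) (hb1 : b ≠ 1) (hy : 0 < y) (t : ℝ) :
    b ^ (logb b y * t) = y ^ t := by
  rw [rpow_mul hb0.le, rpow_logb hb0 hb1 hy]

theorem tendsto_one_sub_nhdsLT_one : Tendsto (fun ρ : ℝ => 1 - ρ) (𝓝[<] 1) (𝓝[>] 0) := by
  have hmaps : MapsTo (fun ρ : ℝ => 1 - ρ) (Iio 1) (Ioi 0) :=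
    fun _ hρ => sub_pos.mpr (mem_Iio.mp hρ)
  simpa using (continuous_sub_left (1 : ℝ)).continuousWithinAt.tendsto_nhdsWithin hmaps (x := 1)

/-- `Q(ρ)`; here `logb ρ (1 - ρ) = log (1 - ρ) / log ρ` is the paper's `Z`. -/
noncomputable def noFrogReachProb (δ ρ : ℝ) : ℝ :=
  ∏ j ∈ range ⌊logb ρ (1 - ρ) * (1 - δ)⌋₊, (1 - ρ ^ (logb ρ (1 - ρ) * (1 - δ) + j))

section

variable {δ ρ : ℝ}

theorem logb_one_sub_mul_nonneg (hδ1 : δ < 1) (hρ0 : 0 < ρ) (hρ1 : ρ < 1) :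
    0 ≤ logb ρ (1 - ρ) * (1 - δ) :=
  mul_nonneg (logb_nonneg_of_base_lt_one hρ0 hρ1 (by linarith) (by linarith)) (by linarith)

theorem noFrogReachProb_nonneg (hδ1 : δ < 1) (hρ0 : 0 < ρ) (hρ1 : ρ < 1) :
    0 ≤ noFrogReachProb δ ρ := by
  have hA := logb_one_sub_mul_nonneg hδ1 hρ0 hρ1
  exact prod_nonneg fun j _ => sub_nonneg.mpr (rpow_le_one hρ0.le hρ1.le (by positivity))

theorem noFrogReachProb_le (hδ1 : δ < 1) (hρ0 : 0 < ρ) (hρ1 : ρ < 1) :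
    noFrogReachProb δ ρ ≤ exp (-((1 - ρ) ^ (-δ) * (1 - (1 - ρ) ^ (1 - δ) / ρ))) := by
  have hA := logb_one_sub_mul_nonneg hδ1 hρ0 hρ1
  set A := logb ρ (1 - ρ) * (1 - δ)
  have h1ρ : 0 < 1 - ρ := sub_pos.mpr hρ1
  have hρA : ρ ^ A = (1 - ρ) ^ (1 - δ) := rpow_logb_mul hρ0 hρ1.ne h1ρ _
  have hρN : ρ ^ ⌊A⌋₊ ≤ (1 - ρ) ^ (1 - δ) / ρ := by
    rw [← rpow_natCast, ← hρA, ← rpow_sub_one hρ0.ne']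
    exact rpow_le_rpow_of_exponent_ge hρ0 hρ1.le (Nat.sub_one_lt_floor A).le
  have hsplit : (1 - ρ) ^ (1 - δ) = (1 - ρ) ^ (-δ) * (1 - ρ) := by
    rw [← rpow_add_one h1ρ.ne', neg_add_eq_sub]
  calc noFrogReachProb δ ρ ≤ exp (-∑ j ∈ range ⌊A⌋₊, ρ ^ (A + j)) :=
        prod_one_sub_le_exp_neg_sum _ fun j _ => rpow_le_one hρ0.le hρ1.le (by positivity)
    _ = exp (-((1 - ρ) ^ (-δ) * (1 - ρ ^ ⌊A⌋₊))) := by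
        rw [sum_rpow_add_natCast hρ0 hρ1.ne, hρA, hsplit]
        field_simp
    _ ≤ exp (-((1 - ρ) ^ (-δ) * (1 - (1 - ρ) ^ (1 - δ) / ρ))) := by
        gcongr

theorem tendsto_noFrogReachProb_bound (hδ : 0 < δ) (hδ1 : δ < 1) :
    Tendsto (fun ρ => exp (-((1 - ρ) ^ (-δ) * (1 - (1 - ρ) ^ (1 - δ) / ρ)))) (𝓝[<] 1) (𝓝 0) := by
  have hblowup : Tendsto (fun ρ : ℝ => (1 - ρ) ^ (-δ)) (𝓝[<] 1) atTop :=
    (tendsto_rpow_neg_nhdsGT_zero (neg_neg_of_pos hδ)).comp tendsto_one_sub_nhdsLT_one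
  have hcont : ContinuousAt (fun ρ : ℝ => 1 - (1 - ρ) ^ (1 - δ) / ρ) 1 := by
    fun_prop (disch := first | exact one_ne_zero | exact Or.inr (by linarith))
  have hfactor : Tendsto (fun ρ : ℝ => 1 - (1 - ρ) ^ (1 - δ) / ρ) (𝓝[<] 1) (𝓝 1) := by
    simpa [zero_rpow (sub_pos.mpr hδ1).ne'] using hcont.tendsto.mono_left nhdsWithin_le_nhds
  exact tendsto_exp_neg_atTop_nhds_zero.comp (hblowup.atTop_mul_pos one_pos hfactor)

end

theorem near_frogs_reach (δ : ℝ) (hδ : 0 < δ) (hδ1 : δ < 1) :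
    Tendsto
      (fun ρ : ℝ =>
        ∏ j ∈ Finset.range ⌊Real.log (1 - ρ) / Real.log ρ * (1 - δ)⌋₊,
          (1 - ρ ^ (Real.log (1 - ρ) / Real.log ρ * (1 - δ) + (j : ℝ))))
      (nhdsWithin 1 (Set.Iio 1)) (nhds 0) := by
  have hunit : ∀ᶠ ρ in 𝓝[<] (1 : ℝ), ρ ∈ Set.Ioo 0 1 := Ioo_mem_nhdsLT one_pos
  refine tendsto_of_tendsto_of_tendsto_of_le_of_le' tendsto_const_nhds
    (tendsto_noFrogReachProb_bound hδ hδ1) ?_ ?_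
  · filter_upwards [hunit] with ρ hρ using noFrogReachProb_nonneg hδ1 hρ.1 hρ.2
  · filter_upwards [hunit] with ρ hρ using noFrogReachProb_le hδ1 hρ.1 hρ.2
end
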